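/- arXiv:1406.5311 — 2 statements merged into one kernel-verified Lean document; each statement's English description precedes it below -/
import Mathlib

section
/- Let a_1,...,a_n ∈ ℝ^d be unit vectors and let ρ⁺ := max(0, inf_{p∈Δ} ‖Ap‖) = inf_{p∈Δ} ‖Ap‖. Then the radius of the minimum enclosing Euclidean ball of {a_1,...,a_n} equals √(1 − (ρ⁺)²). Equivalently, min over centers c of max_i ‖c − a_i‖² equals 1 − inf_{p∈Δ} ‖Ap‖². -/
/-!
Let `x = ∑ pᵢ aᵢ` be the point of least norm in the convex hull of the `aᵢ`, with `p ∈ Δ`.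
For any center `c`, averaging with the weights `p` gives
`maxᵢ ‖c - aᵢ‖² ≥ ∑ pᵢ ‖c - aᵢ‖² = ‖c - x‖² + 1 - ‖x‖² ≥ 1 - ‖x‖²`.
Conversely, first-order optimality of `x` on the convex hull gives `‖x‖² ≤ ⟪x, aᵢ⟫`, hence
`‖x - aᵢ‖² = ‖x‖² - 2⟪x, aᵢ⟫ + 1 ≤ 1 - ‖x‖²`, so the center `x` attains the bound.
-/

open Set
open scoped RealInnerProductSpace

section
variable {E : Type*} [NormedAddCommGroup E] [InnerProductSpace ℝ E]

theorem IsMinOn.norm_sq_le_real_inner {K : Set E} (hK : Convex ℝ K) {x y : E}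
    (hmin : IsMinOn (‖·‖) K x) (hx : x ∈ K) (hy : y ∈ K) : ‖x‖ ^ 2 ≤ ⟪x, y⟫ := by
  -- `0 ≤ 2⟪x, y - x⟫` is the derivative of `‖·‖²` at `x` in the direction of `y ∈ K`.
  have hmin_sq : IsMinOn (‖·‖ ^ 2) K x := fun z hz =>
    pow_le_pow_left₀ (norm_nonneg x) (hmin hz) 2
  have h := hmin_sq.localize.hasFDerivWithinAt_nonneg
    (hasStrictFDerivAt_norm_sq x).hasFDerivAt.hasFDerivWithinAt
    (sub_mem_posTangentConeAt_of_segment_subset (hK.segment_subset hx hy))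
  simp only [FunLike.coe_smul, Pi.smul_apply, innerSL_apply_apply, inner_sub_right,
    nsmul_eq_mul, Nat.cast_ofNat, real_inner_self_eq_norm_sq] at h
  linarith

theorem sum_mul_norm_sub_sq {ι : Type*} [Fintype ι] {w : ι → ℝ} (hw : ∑ i, w i = 1)
    (a : ι → E) (c : E) :
    ∑ i, w i * ‖c - a i‖ ^ 2
      = ‖c - ∑ i, w i • a i‖ ^ 2 + ∑ i, w i * ‖a i‖ ^ 2 - ‖∑ i, w i • a i‖ ^ 2 := by
  have hinner : ⟪c, ∑ i, w i • a i⟫ = ∑ i, w i * ⟪c, a i⟫ := by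
    simp only [inner_sum, real_inner_smul_right]
  have hterm : ∀ i, w i * ‖c - a i‖ ^ 2
      = w i * ‖c‖ ^ 2 - 2 * (w i * ⟪c, a i⟫) + w i * ‖a i‖ ^ 2 := by
    intro i
    rw [norm_sub_sq_real]
    ring
  rw [Finset.sum_congr rfl fun i _ => hterm i, Finset.sum_add_distrib, Finset.sum_sub_distrib,
    ← Finset.sum_mul, hw, ← Finset.mul_sum, ← hinner, norm_sub_sq_real]
  ring

end

section
variable {E ι : Type*} [NormedAddCommGroup E] [InnerProductSpace ℝ E] [Fintype ι] (a : ι → E)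

theorem exists_isMinOn_norm_sum_smul [Nonempty ι] :
    ∃ p ∈ stdSimplex ℝ ι, IsMinOn (fun q : ι → ℝ => ‖∑ i, q i • a i‖) (stdSimplex ℝ ι) p := by
  classical
  exact (isCompact_stdSimplex ℝ ι).exists_isMinOn
    ⟨_, single_mem_stdSimplex ℝ (Classical.arbitrary ι)⟩ (by fun_prop)

variable {a} {p : ι → ℝ}

theorem norm_sq_le_real_inner_of_isMinOn_norm_sum_smul
    (hmin : IsMinOn (fun q : ι → ℝ => ‖∑ i, q i • a i‖) (stdSimplex ℝ ι) p)
    (hp : p ∈ stdSimplex ℝ ι) (i : ι) :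
    ‖∑ j, p j • a j‖ ^ 2 ≤ ⟪∑ j, p j • a j, a i⟫ := by
  classical
  set L := Fintype.linearCombination ℝ a
  have hL : ∀ q, L q = ∑ j, q j • a j := Fintype.linearCombination_apply ℝ a
  have hmin' : IsMinOn (‖·‖) (L '' stdSimplex ℝ ι) (L p) := by
    rintro _ ⟨q, hq, rfl⟩
    show ‖L p‖ ≤ ‖L q‖
    rw [hL, hL]
    exact hmin hq
  have hai : a i ∈ L '' stdSimplex ℝ ι :=
    ⟨_, single_mem_stdSimplex ℝ i,
      (Fintype.linearCombination_apply_single ℝ a i 1).trans (one_smul ℝ _)⟩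
  simpa only [hL] using
    hmin'.norm_sq_le_real_inner ((convex_stdSimplex ℝ ι).linear_image L) ⟨p, hp, rfl⟩ hai

theorem one_sub_norm_sq_le_iSup_norm_sub_sq (ha : ∀ i, ‖a i‖ = 1) (hp : p ∈ stdSimplex ℝ ι)
    (c : E) : 1 - ‖∑ i, p i • a i‖ ^ 2 ≤ ⨆ i, ‖c - a i‖ ^ 2 := by
  have hbdd : BddAbove (range fun i => ‖c - a i‖ ^ 2) := (finite_range _).bddAbove
  calc 1 - ‖∑ i, p i • a i‖ ^ 2
      ≤ ‖c - ∑ i, p i • a i‖ ^ 2 + ∑ i, p i * ‖a i‖ ^ 2 - ‖∑ i, p i • a i‖ ^ 2 := by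
        simp only [ha, one_pow, mul_one, hp.2]
        linarith [sq_nonneg ‖c - ∑ i, p i • a i‖]
    _ = ∑ i, p i * ‖c - a i‖ ^ 2 := (sum_mul_norm_sub_sq hp.2 a c).symm
    _ ≤ ∑ i, p i * ⨆ j, ‖c - a j‖ ^ 2 :=
        Finset.sum_le_sum fun i _ => mul_le_mul_of_nonneg_left (le_ciSup hbdd i) (hp.1 i)
    _ = ⨆ i, ‖c - a i‖ ^ 2 := by rw [← Finset.sum_mul, hp.2, one_mul]

theorem iInf_iSup_norm_sub_sq_eq [Nonempty ι] (ha : ∀ i, ‖a i‖ = 1) (hp : p ∈ stdSimplex ℝ ι)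
    (hmin : IsMinOn (fun q : ι → ℝ => ‖∑ i, q i • a i‖) (stdSimplex ℝ ι) p) :
    ⨅ c : E, ⨆ i, ‖c - a i‖ ^ 2 = 1 - ‖∑ i, p i • a i‖ ^ 2 := by
  refine IsLeast.csInf_eq ⟨⟨∑ i, p i • a i, le_antisymm (ciSup_le fun i => ?_)
    (one_sub_norm_sq_le_iSup_norm_sub_sq ha hp _)⟩, ?_⟩
  · have := norm_sq_le_real_inner_of_isMinOn_norm_sum_smul hmin hp i
    rw [norm_sub_sq_real, ha i]
    linarith
  · rintro _ ⟨c, rfl⟩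
    exact one_sub_norm_sq_le_iSup_norm_sub_sq ha hp c

theorem iInf_norm_sum_smul_eq (hp : p ∈ stdSimplex ℝ ι)
    (hmin : IsMinOn (fun q : ι → ℝ => ‖∑ i, q i • a i‖) (stdSimplex ℝ ι) p) :
    ⨅ q : stdSimplex ℝ ι, ‖∑ i, (q : ι → ℝ) i • a i‖ = ‖∑ i, p i • a i‖ :=
  IsLeast.csInf_eq ⟨⟨⟨p, hp⟩, rfl⟩, by rintro _ ⟨q, rfl⟩; exact hmin q.2⟩

end

/-- Minimum enclosing ball radius: min over centers `c` of `max_i ‖c - a_i‖²`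
equals `1 - (inf_{p∈Δ} ‖Ap‖)²` when all the points `a_i` are unit vectors. -/
theorem stmt_2 {d n : ℕ} (hn : 0 < n) (a : Fin n → EuclideanSpace ℝ (Fin d))
    (ha : ∀ i, ‖a i‖ = 1) :
    (⨅ c : EuclideanSpace ℝ (Fin d), ⨆ i : Fin n, ‖c - a i‖ ^ 2)
      = 1 - (⨅ p : {p : Fin n → ℝ // (∀ i, 0 ≤ p i) ∧ ∑ i, p i = 1},
          ‖∑ i, (p : Fin n → ℝ) i • a i‖) ^ 2 := by
  have : Nonempty (Fin n) := ⟨⟨0, hn⟩⟩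
  obtain ⟨p, hp, hmin⟩ := exists_isMinOn_norm_sum_smul a
  rw [iInf_iSup_norm_sub_sq_eq ha hp hmin, ← iInf_norm_sum_smul_eq hp hmin]
  rfl
end

section
/- If ρ_A ≤ −γ for some γ ≥ 0 (where ρ_A is the affine margin of A), then every vector v ∈ lin(A) with ‖v‖ ≤ γ can be written as v = A p for some probability vector p ∈ Δ. -/
/-!
Suppose `v ∈ lin(A)` with `‖v‖ ≤ γ` were not in the convex hull of the columns. Separating `v`
from this compact convex set by a functional, represented inside `lin(A)` by a vector `w`, gives
`⟪w, aᵢ⟫ < ⟪w, v⟫ ≤ ‖w‖ ‖v‖` for every `i`. The unit vector `-w / ‖w‖ ∈ lin(A)` then has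
`minᵢ ⟪-w / ‖w‖, aᵢ⟫ > -‖v‖ ≥ -γ`, contradicting `ρ_A ≤ -γ`.
-/

open Set Submodule RealInnerProductSpace

theorem exists_mem_stdSimplex_of_mem_convexHull_range {R E ι : Type*} [Field R] [LinearOrder R]
    [IsStrictOrderedRing R] [AddCommGroup E] [Module R E] [Fintype ι] {a : ι → E} {x : E}
    (hx : x ∈ convexHull R (range a)) : ∃ p ∈ stdSimplex R ι, ∑ i, p i • a i = x := by
  classical
  let L := Fintype.linearCombination R a
  have hsub : range a ⊆ L '' stdSimplex R ι := by
    rintro _ ⟨i, rfl⟩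
    exact ⟨Pi.single i 1, single_mem_stdSimplex R i, by simp [L]⟩
  obtain ⟨p, hp, rfl⟩ := convexHull_min hsub ((convex_stdSimplex R ι).linear_image L) hx
  exact ⟨p, hp, Fintype.linearCombination_apply R a p⟩

variable {E ι : Type*} [NormedAddCommGroup E] [InnerProductSpace ℝ E]

theorem exists_mem_span_inner_lt_of_notMem_convexHull [Finite ι] {a : ι → E} {x : E}
    (hx : x ∈ span ℝ (range a)) (hxa : x ∉ convexHull ℝ (range a)) :
    ∃ w ∈ span ℝ (range a), ∀ i, ⟪w, a i⟫ < ⟪w, x⟫ := by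
  set K := span ℝ (range a)
  obtain ⟨f, u, hfa, hfx⟩ := geometric_hahn_banach_closed_point (convex_convexHull ℝ _)
    ((finite_range a).isCompact_convexHull ℝ).isClosed hxa
  have : FiniteDimensional ℝ K := FiniteDimensional.span_of_finite ℝ (finite_range a)
  let w : K := (InnerProductSpace.toDual ℝ K).symm (f.comp K.subtypeL)
  have hw : ∀ y ∈ K, ⟪(w : E), y⟫ = f y := fun y hy =>
    (K.coe_inner w ⟨y, hy⟩).symm.trans InnerProductSpace.toDual_symm_apply
  refine ⟨w, w.2, fun i => ?_⟩
  rw [hw _ (subset_span ⟨i, rfl⟩), hw x hx]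
  exact (hfa _ (subset_convexHull ℝ _ ⟨i, rfl⟩)).trans hfx

/-- The affine margin `ρ_A`; a family `a : ι → E` plays the role of the matrix `A`. -/
noncomputable def affineMargin (a : ι → E) : ℝ :=
  ⨆ w : {w : E // w ∈ span ℝ (range a) ∧ ‖w‖ = 1}, ⨅ i, ⟪(w : E), a i⟫

theorem iInf_inner_le_affineMargin [Finite ι] [Nonempty ι] {a : ι → E} {w : E}
    (hw : w ∈ span ℝ (range a)) (hw₁ : ‖w‖ = 1) : ⨅ i, ⟪w, a i⟫ ≤ affineMargin a := by
  obtain ⟨i₀⟩ := ‹Nonempty ι›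
  refine le_ciSup (f := fun w : {w : E // w ∈ span ℝ (range a) ∧ ‖w‖ = 1} => ⨅ i, ⟪(w : E), a i⟫)
    ⟨‖a i₀‖, ?_⟩ ⟨w, hw, hw₁⟩
  rintro _ ⟨⟨w', -, hw'₁⟩, rfl⟩
  calc ⨅ i, ⟪w', a i⟫ ≤ ⟪w', a i₀⟫ := ciInf_le (finite_range _).bddBelow i₀
    _ ≤ ‖w'‖ * ‖a i₀‖ := real_inner_le_norm _ _
    _ = ‖a i₀‖ := by rw [hw'₁, one_mul]

theorem mem_convexHull_of_norm_le_neg_affineMargin [Finite ι] [Nonempty ι] {a : ι → E} {x : E}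
    (hx : x ∈ span ℝ (range a)) (hxn : ‖x‖ ≤ -affineMargin a) : x ∈ convexHull ℝ (range a) := by
  by_contra hxa
  obtain ⟨w, hwK, hw⟩ := exists_mem_span_inner_lt_of_notMem_convexHull hx hxa
  obtain ⟨i₀, hi₀⟩ := exists_eq_ciInf_of_finite (f := fun i => ⟪-‖w‖⁻¹ • w, a i⟫)
  have hw₀ : w ≠ 0 := by
    rintro rfl
    simpa using hw i₀
  have hw_pos : 0 < ‖w‖ := norm_pos_iff.mpr hw₀
  have hnorm : ‖w‖ * ‖x‖ ≤ ⟪w, a i₀⟫ := by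
    have hmin : ⟪-‖w‖⁻¹ • w, a i₀⟫ ≤ -‖x‖ := by
      rw [hi₀]
      refine (iInf_inner_le_affineMargin (smul_mem _ _ hwK) ?_).trans (le_neg_of_le_neg hxn)
      rw [norm_smul, norm_neg, norm_inv, norm_norm, inv_mul_cancel₀ hw_pos.ne']
    rwa [real_inner_smul_left, neg_mul, neg_le_neg_iff, le_inv_mul_iff₀ hw_pos] at hmin
  linarith [hw i₀, real_inner_le_norm w x]

theorem stmt_4_general {d n : ℕ} (hn : 0 < n) (a : Fin n → EuclideanSpace ℝ (Fin d))
    (γ : ℝ)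
    (hmargin : (⨆ w : {w : EuclideanSpace ℝ (Fin d) //
        w ∈ Submodule.span ℝ (Set.range a) ∧ ‖w‖ = 1},
      ⨅ i : Fin n, (inner ℝ (w : EuclideanSpace ℝ (Fin d)) (a i) : ℝ)) ≤ -γ) :
    ∀ v : EuclideanSpace ℝ (Fin d), v ∈ Submodule.span ℝ (Set.range a) → ‖v‖ ≤ γ →
      ∃ p : Fin n → ℝ, (∀ i, 0 ≤ p i) ∧ ∑ i, p i = 1 ∧ v = ∑ i, p i • a i := by
  intro v hv hvγ
  have : Nonempty (Fin n) := ⟨⟨0, hn⟩⟩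
  have hρ : affineMargin a ≤ -γ := hmargin
  obtain ⟨p, ⟨hp₀, hp₁⟩, rfl⟩ := exists_mem_stdSimplex_of_mem_convexHull_range
    (mem_convexHull_of_norm_le_neg_affineMargin hv (by linarith))
  exact ⟨p, hp₀, hp₁, rfl⟩

/-- If `ρ_A ≤ -γ` for some `γ ≥ 0`, then every `v ∈ lin(A)` with `‖v‖ ≤ γ` can be
written as `v = A p` for some probability vector `p ∈ Δ`. -/
theorem stmt_4 {d n : ℕ} (hn : 0 < n) (a : Fin n → EuclideanSpace ℝ (Fin d))
    (γ : ℝ) (hγ : 0 ≤ γ)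
    (hmargin : (⨆ w : {w : EuclideanSpace ℝ (Fin d) //
        w ∈ Submodule.span ℝ (Set.range a) ∧ ‖w‖ = 1},
      ⨅ i : Fin n, (inner ℝ (w : EuclideanSpace ℝ (Fin d)) (a i) : ℝ)) ≤ -γ) :
    ∀ v : EuclideanSpace ℝ (Fin d), v ∈ Submodule.span ℝ (Set.range a) → ‖v‖ ≤ γ →
      ∃ p : Fin n → ℝ, (∀ i, 0 ≤ p i) ∧ ∑ i, p i = 1 ∧ v = ∑ i, p i • a i :=
  stmt_4_general hn a γ hmargin
end
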